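/- Fix a ≥ 2 and a constant 0 < r < a·H_a. If n = ⌊rk⌋, then the probability that a uniformly random string of length n over [a] is k-omni tends to 0 as k → ∞. -/

import Mathlib

/-!
Scan a string greedily, cutting it into blocks, each a shortest segment containing every letter.
A `k`-omni string has at least `k` blocks: otherwise the word made of the letters completing the
blocks, followed by a letter missing from the unfinished tail, is not a subsequence.
The block lengths of a random string are independent coupon-collector times, whose probability
generating function `ψ = couponPGF a a` satisfies `ψ 1 = 1` and `ψ' 1 = a H_a`. A Chernoff-type
count then bounds the number of strings of length `n` with at least `k` blocks by
`(a / x) ^ n * ψ x ^ k` for `0 < x ≤ 1`, and as `a H_a > r` some `x < 1` has `ψ x < x ^ r`,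
so the probability is at most `(ψ x / x ^ r) ^ k → 0`.
-/

open Finset Filter
open scoped Classical

theorem card_filter_ofFn_succ {α : Type*} [Fintype α] (n : ℕ) (P : List α → Prop)
    [DecidablePred P] :
    #{S : Fin (n + 1) → α | P (List.ofFn S)}
      = ∑ c : α, #{S : Fin n → α | P (c :: List.ofFn S)} := by
  simp only [← Fintype.card_subtype, ← Fintype.card_sigma]
  refine Fintype.card_congr ((Equiv.subtypeEquiv (Fin.consEquiv fun _ => α).symm fun S => ?_).trans
    (Equiv.subtypeProdEquivSigmaSubtype fun c S => P (c :: List.ofFn S)))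
  rw [List.ofFn_succ]
  exact Iff.rfl

section Blocks

variable {α : Type*} [Fintype α] [DecidableEq α]

def blockCount (seen : Finset α) : List α → ℕ
  | [] => 0
  | c :: s => if insert c seen = univ then blockCount ∅ s + 1 else blockCount (insert c seen) s

theorem exists_cons_not_sublist (s : List α) {seen : Finset α} (hseen : seen ≠ univ) :
    ∃ c ∉ seen, ∃ w : List α, w.length = blockCount seen s ∧ ¬ (c :: w).Sublist s := by
  induction s generalizing seen with
  | nil =>
    obtain ⟨c, hc⟩ : ∃ c, c ∉ seen := by simpa [eq_univ_iff_forall] using hseen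
    exact ⟨c, hc, [], rfl, by simp⟩
  | cons d t ih =>
    by_cases hd : insert d seen = univ
    · have hd_seen : d ∉ seen := fun h => hseen (by rwa [insert_eq_of_mem h] at hd)
      obtain ⟨c, -, w, hw, hcw⟩ :=
        ih (seen := ∅) (hd ▸ (insert_nonempty d seen).ne_empty.symm)
      refine ⟨d, hd_seen, c :: w, by simp [blockCount, hd, hw], fun h => hcw ?_⟩
      exact List.cons_sublist_cons.mp h
    · obtain ⟨c, hc, w, hw, hcw⟩ := ih hd
      have hcd : c ≠ d := fun h => hc (h ▸ mem_insert_self c seen)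
      refine ⟨c, fun h => hc (mem_insert_of_mem h), w, by simp [blockCount, hd, hw],
        fun h => hcw (h.of_cons_of_ne hcd)⟩

theorem le_blockCount_of_forall_sublist [Nonempty α] {s : List α} {k : ℕ}
    (h : ∀ T : List α, T.length = k → T.Sublist s) : k ≤ blockCount ∅ s := by
  by_contra! hlt
  obtain ⟨c, -, w, hw, hcw⟩ :=
    exists_cons_not_sublist s (univ_nonempty (α := α)).ne_empty.symm
  exact hcw ((List.sublist_append_left _ (List.replicate (k - (w.length + 1)) c)).trans
    (h _ (by simp; omega)))

def numBlocksGE (n k : ℕ) (seen : Finset α) : ℕ :=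
  #{S : Fin n → α | k ≤ blockCount seen (List.ofFn S)}

theorem numBlocksGE_zero_right (n : ℕ) (seen : Finset α) :
    numBlocksGE n 0 seen = Fintype.card α ^ n := by
  simp [numBlocksGE]

theorem numBlocksGE_zero_left (k : ℕ) (seen : Finset α) : numBlocksGE 0 (k + 1) seen = 0 := by
  simp [numBlocksGE, blockCount]

theorem numBlocksGE_succ_succ (n k : ℕ) (seen : Finset α) :
    numBlocksGE (n + 1) (k + 1) seen = ∑ c : α,
      if insert c seen = univ then numBlocksGE n k (∅ : Finset α)
      else numBlocksGE n (k + 1) (insert c seen) := by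
  rw [numBlocksGE, card_filter_ofFn_succ n (fun l : List α => k + 1 ≤ blockCount seen l)]
  refine sum_congr rfl fun c _ => ?_
  split_ifs with hc <;> simp [numBlocksGE, blockCount, hc]

end Blocks

/-- `geomPGF a i` is the generating function of the waiting time for an event of probability
`i / a`, and `couponPGF a j` that of the time needed to see `j` missing letters out of `a`. -/
noncomputable def geomPGF (a i : ℕ) (x : ℝ) : ℝ := i * x / (a - (a - i) * x)

noncomputable def couponPGF (a j : ℕ) (x : ℝ) : ℝ := ∏ i ∈ Icc 1 j, geomPGF a i x

section PGF

variable {a i j : ℕ} {x : ℝ}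

theorem geomPGF_denom_pos (hx0 : 0 < x) (hx1 : x ≤ 1) (hi : 1 ≤ i) :
    0 < (a : ℝ) - (a - i) * x := by
  have hi' : (1 : ℝ) ≤ i := by exact_mod_cast hi
  rcases le_or_gt ((a : ℝ) - i) 0 with h | h <;> nlinarith

theorem geomPGF_pos (hx0 : 0 < x) (hx1 : x ≤ 1) (hi : 1 ≤ i) : 0 < geomPGF a i x := by
  have hi' : (0 : ℝ) < i := by exact_mod_cast hi
  exact div_pos (by positivity) (geomPGF_denom_pos hx0 hx1 hi)

theorem geomPGF_one (hi : i ≠ 0) : geomPGF a i 1 = 1 := by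
  simp [geomPGF, hi]

theorem hasDerivAt_geomPGF (hi : i ≠ 0) : HasDerivAt (geomPGF a i) (a / i) 1 := by
  have hi' : (i : ℝ) ≠ 0 := by exact_mod_cast hi
  have hnum : HasDerivAt (fun x : ℝ => i * x) i 1 := by
    simpa using (hasDerivAt_id (1 : ℝ)).const_mul (i : ℝ)
  have hden : HasDerivAt (fun x : ℝ => a - (a - i) * x) (-(a - i)) 1 := by
    simpa using ((hasDerivAt_id (1 : ℝ)).const_mul ((a : ℝ) - i)).const_sub (a : ℝ)
  refine (hnum.div hden (by simpa using hi')).congr_deriv ?_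
  rw [mul_one, sub_sub_cancel]
  field_simp
  ring

theorem geomPGF_mul (hx0 : 0 < x) (hx1 : x ≤ 1) (hi : 1 ≤ i) :
    (a / x - (a - i)) * geomPGF a i x = i := by
  have hd := (geomPGF_denom_pos (a := a) hx0 hx1 hi).ne'
  rw [geomPGF, show (a : ℝ) / x - (a - i) = (a - (a - i) * x) / x by field_simp]
  field_simp

theorem couponPGF_zero : couponPGF a 0 x = 1 := rfl

theorem couponPGF_succ : couponPGF a (j + 1) x = geomPGF a (j + 1) x * couponPGF a j x := by
  rw [couponPGF, couponPGF, prod_Icc_succ_top (by omega), mul_comm]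

theorem couponPGF_one : couponPGF a j 1 = 1 :=
  prod_eq_one fun i hi => geomPGF_one (by have := (mem_Icc.mp hi).1; omega)

theorem couponPGF_pos (hx0 : 0 < x) (hx1 : x ≤ 1) : 0 < couponPGF a j x :=
  prod_pos fun _ hi => geomPGF_pos hx0 hx1 (mem_Icc.mp hi).1

theorem couponPGF_succ_rec (hx0 : 0 < x) (hx1 : x ≤ 1) :
    (a - (j + 1 : ℕ)) * couponPGF a (j + 1) x + (j + 1 : ℕ) * couponPGF a j x
      = a / x * couponPGF a (j + 1) x := by
  rw [couponPGF_succ]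
  linear_combination (-couponPGF a j x) * geomPGF_mul (a := a) hx0 hx1 (Nat.le_add_left 1 j)

theorem hasDerivAt_couponPGF :
    HasDerivAt (couponPGF a j) (a * ∑ i ∈ Icc 1 j, (1 : ℝ) / i) 1 := by
  have hprod := HasDerivAt.fun_finsetProd (u := Icc 1 j) (x := (1 : ℝ))
    fun i hi => hasDerivAt_geomPGF (a := a) (Nat.one_le_iff_ne_zero.mp (mem_Icc.mp hi).1)
  refine hprod.congr_deriv ?_
  rw [mul_sum]
  refine sum_congr rfl fun i _ => ?_
  rw [prod_eq_one fun l hl => geomPGF_one (by have := (mem_Icc.mp (mem_of_mem_erase hl)).1; omega),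
    one_smul, mul_one_div]

theorem exists_couponPGF_lt_rpow {r : ℝ} (hr : r < a * ∑ i ∈ Icc 1 a, (1 : ℝ) / i) :
    ∃ x, 0 < x ∧ x < 1 ∧ couponPGF a a x < x ^ r := by
  have hderiv : HasDerivAt (fun y => y ^ r - couponPGF a a y)
      (r - a * ∑ i ∈ Icc 1 a, (1 : ℝ) / i) 1 := by
    simpa using
      (Real.hasDerivAt_rpow_const (p := r) (Or.inl one_ne_zero)).fun_sub hasDerivAt_couponPGF
  have hslope := hderiv.hasDerivWithinAt.limsup_slope_le' Set.self_notMem_Iio (sub_neg.mpr hr)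
  obtain ⟨y, hy, hy01⟩ := (hslope.and (Ioo_mem_nhdsLT zero_lt_one)).exists
  refine ⟨y, hy01.1, hy01.2, ?_⟩
  rw [slope_def_field, couponPGF_one, Real.one_rpow, sub_self, sub_zero, div_neg_iff] at hy
  rcases hy with ⟨hy, -⟩ | ⟨-, hy⟩
  · linarith
  · linarith [hy01.2]

end PGF

section Bounds

variable {α : Type*} [Fintype α] [DecidableEq α] {x : ℝ}

theorem sum_couponPGF_card_compl_insert (hx0 : 0 < x) (hx1 : x ≤ 1) {s : Finset α}
    (hs : s ≠ univ) :
    ∑ c : α, couponPGF (Fintype.card α) #(insert c s)ᶜ x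
      = Fintype.card α / x * couponPGF (Fintype.card α) #sᶜ x := by
  obtain ⟨j, hj⟩ : ∃ j, #sᶜ = j + 1 :=
    Nat.exists_eq_succ_of_ne_zero (by rwa [Ne, card_eq_zero, compl_eq_empty_iff])
  have hs_card : (#s : ℝ) + (j + 1 : ℕ) = Fintype.card α := by
    exact_mod_cast hj ▸ card_add_card_compl s
  have h_mem : ∀ c ∈ s, couponPGF (Fintype.card α) #(insert c s)ᶜ x
      = couponPGF (Fintype.card α) (j + 1) x := fun c hc => by rw [insert_eq_of_mem hc, hj]
  have h_notMem : ∀ c ∈ sᶜ, couponPGF (Fintype.card α) #(insert c s)ᶜ x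
      = couponPGF (Fintype.card α) j x := fun c hc => by
    have := card_insert_of_notMem (mem_compl.mp hc)
    have := card_add_card_compl (insert c s)
    have := card_add_card_compl s
    congr 1
    omega
  rw [← sum_add_sum_compl s, sum_congr rfl h_mem, sum_congr rfl h_notMem, sum_const, sum_const,
    nsmul_eq_mul, nsmul_eq_mul, hj, ← couponPGF_succ_rec hx0 hx1, ← hs_card]
  ring

theorem numBlocksGE_empty_le_of_succ (hx0 : 0 < x) (hx1 : x ≤ 1) {n : ℕ}
    (h : ∀ k, (numBlocksGE n (k + 1) (∅ : Finset α) : ℝ)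
      ≤ (Fintype.card α / x) ^ n * couponPGF (Fintype.card α) (Fintype.card α) x ^ (k + 1))
    (k : ℕ) :
    (numBlocksGE n k (∅ : Finset α) : ℝ)
      ≤ (Fintype.card α / x) ^ n * couponPGF (Fintype.card α) (Fintype.card α) x ^ k := by
  cases k with
  | zero =>
    rw [numBlocksGE_zero_right, pow_zero, mul_one, Nat.cast_pow]
    exact pow_le_pow_left₀ (by positivity) (le_div_self (by positivity) hx0 hx1) n
  | succ k => exact h k

variable [Nonempty α]

theorem numBlocksGE_succ_le (hx0 : 0 < x) (hx1 : x ≤ 1) (n k : ℕ) {seen : Finset α}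
    (hseen : seen ≠ univ) :
    (numBlocksGE n (k + 1) seen : ℝ)
      ≤ (Fintype.card α / x) ^ n * couponPGF (Fintype.card α) #seenᶜ x
        * couponPGF (Fintype.card α) (Fintype.card α) x ^ k := by
  induction n generalizing k seen with
  | zero =>
    rw [numBlocksGE_zero_left, Nat.cast_zero]
    exact mul_nonneg (mul_nonneg (by positivity) (couponPGF_pos hx0 hx1).le)
      (pow_nonneg (couponPGF_pos hx0 hx1).le k)
  | succ n ih =>
    have h_reset := numBlocksGE_empty_le_of_succ hx0 hx1 fun k => by
      simpa [pow_succ', mul_assoc] using ih k univ_nonempty.ne_empty.symm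
    have h_letter : ∀ c : α,
        ((if insert c seen = univ then numBlocksGE n k (∅ : Finset α)
          else numBlocksGE n (k + 1) (insert c seen) : ℕ) : ℝ)
        ≤ (Fintype.card α / x) ^ n * couponPGF (Fintype.card α) (Fintype.card α) x ^ k
          * couponPGF (Fintype.card α) #(insert c seen)ᶜ x := fun c => by
      split_ifs with hc
      · simpa [hc, couponPGF_zero] using h_reset k
      · exact (ih k hc).trans_eq (by ring)
    rw [numBlocksGE_succ_succ, Nat.cast_sum]
    calc _ ≤ ∑ c : α, (Fintype.card α / x) ^ n
            * couponPGF (Fintype.card α) (Fintype.card α) x ^ k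
            * couponPGF (Fintype.card α) #(insert c seen)ᶜ x := sum_le_sum fun c _ => h_letter c
      _ = _ := by
        rw [← mul_sum, sum_couponPGF_card_compl_insert hx0 hx1 hseen]
        ring

theorem card_forall_sublist_le (hx0 : 0 < x) (hx1 : x ≤ 1) (n k : ℕ) :
    (#{S : Fin n → α | ∀ T : List α, T.length = k → T.Sublist (List.ofFn S)} : ℝ)
      ≤ (Fintype.card α / x) ^ n * couponPGF (Fintype.card α) (Fintype.card α) x ^ k := by
  refine le_trans ?_ (numBlocksGE_empty_le_of_succ hx0 hx1 (fun k => ?_) k)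
  · exact_mod_cast card_le_card fun S hS => by
      simp only [mem_filter, mem_univ, true_and] at hS ⊢
      exact le_blockCount_of_forall_sublist hS
  · simpa [pow_succ', mul_assoc] using
      numBlocksGE_succ_le hx0 hx1 n k (univ_nonempty (α := α)).ne_empty.symm

end Bounds

/-- For fixed `a ≥ 2` and a constant `0 < r < a H_a` (with `r > 0`), with `n = ⌊r k⌋`, the probability that a
uniformly random string of length `n` over `Fin a` is `k`-omni tends to `0` as `k → ∞`. -/
theorem stmt_13 (a : ℕ) (ha : 2 ≤ a) (r : ℝ)
    (hr0 : 0 < r) (hr : r < (a : ℝ) * ∑ i ∈ Finset.Icc 1 a, (1 : ℝ) / i) :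
    Tendsto (fun k : ℕ =>
        ((Finset.univ.filter (fun S : Fin ⌊r * k⌋₊ → Fin a =>
            ∀ T : List (Fin a), T.length = k → T.Sublist (List.ofFn S))).card : ℝ)
          / (a : ℝ) ^ (⌊r * k⌋₊))
      atTop (nhds 0) := by
  have : Nonempty (Fin a) := Fin.pos_iff_nonempty.mp (by omega)
  obtain ⟨x, hx0, hx1, hψ⟩ := exists_couponPGF_lt_rpow hr
  have hxr : 0 < x ^ r := Real.rpow_pos_of_pos hx0 r
  have hψ0 : 0 < couponPGF a a x := couponPGF_pos hx0 hx1.le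
  refine squeeze_zero (fun k => by positivity) (fun k => ?_) (tendsto_pow_atTop_nhds_zero_of_lt_one
    (div_pos hψ0 hxr).le ((div_lt_one hxr).mpr hψ))
  set n := ⌊r * k⌋₊
  have h_card := card_forall_sublist_le (α := Fin a) hx0 hx1.le n k
  rw [Fintype.card_fin] at h_card
  calc _ ≤ (a / x) ^ n * couponPGF a a x ^ k / (a : ℝ) ^ n :=
        div_le_div_of_nonneg_right h_card (by positivity)
    _ = couponPGF a a x ^ k / x ^ n := by
        rw [div_pow]
        field_simp
    _ ≤ couponPGF a a x ^ k / x ^ (r * k) := by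
        refine div_le_div_of_nonneg_left (by positivity) (Real.rpow_pos_of_pos hx0 _) ?_
        rw [← Real.rpow_natCast]
        exact Real.rpow_le_rpow_of_exponent_ge hx0 hx1.le (Nat.floor_le (by positivity))
    _ = (couponPGF a a x / x ^ r) ^ k := by
        rw [div_pow, ← Real.rpow_natCast (x ^ r), ← Real.rpow_mul hx0.le]
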